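/- Let Σ be a simplicial polyhedral fan in ℝ^d with n rays and ray matrix U of rank d, such that every cone of Σ is a face of a d-dimensional cone (Σ = Σ̄). Let Y_Σ ⊆ ℙ^{|Σ(d)|−1} be the Zariski closure of the image of the monomial map φ_Σ(x) = (x^σ̂)_{σ∈Σ(d)}, and let M be the matrix with M_{ρ,σ} = |det U_σ| if ρ ∉ σ(1) and 0 otherwise. If {y ∈ Y_Σ : M·y = 0} = ∅, then Sing(A_Σ) ⊆ Z(Σ). -/

import Mathlib

open MvPolynomial Finset MeasureTheory
open scoped ENNReal

/-- The polyhedral cone spanned by the ray generators (rows of `U`) indexed by `σ`. -/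
def coneOf {ι κ : Type*} [Fintype ι] (U : Matrix ι κ ℝ) (σ : Finset ι) : Set (κ → ℝ) :=
  {y | ∃ c : ι → ℝ, (∀ i, 0 ≤ c i) ∧ (∀ i, i ∉ σ → c i = 0) ∧ y = ∑ i, c i • U i}

/-- A simplicial polyhedral fan with rays indexed by `ι`, living in the space `κ → ℝ`.
Since the fan is simplicial, each cone is recorded by its finite set of rays. -/
structure SimplicialFan (ι κ : Type*) [Fintype ι] [DecidableEq ι] where
  /-- the ray generator matrix: its rows are the chosen ray generators -/
  U : Matrix ι κ ℝ
  /-- the cones of the fan, each recorded by its set of rays -/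
  cones : Finset (Finset ι)
  empty_mem : ∅ ∈ cones
  ray_mem : ∀ i : ι, {i} ∈ cones
  downward : ∀ σ ∈ cones, ∀ τ, τ ⊆ σ → τ ∈ cones
  indep : ∀ σ ∈ cones, LinearIndependent ℝ (fun i : σ => U i.1)
  inter : ∀ σ ∈ cones, ∀ τ ∈ cones, coneOf U σ ∩ coneOf U τ = coneOf U (σ ∩ τ)

/-- `|det|` of the square submatrix of `U` on the rows indexed by `σ`
(zero if `σ` does not have exactly `card κ` elements). -/
noncomputable def absDetRows {ι κ : Type*} [Fintype κ] [DecidableEq κ]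
    (U : Matrix ι κ ℝ) (σ : Finset ι) : ℝ :=
  if h : σ.card = Fintype.card κ then
    |(Matrix.of fun j k : κ =>
        U ((σ.equivFin.symm (Fintype.equivFinOfCardEq h.symm j)) : ι) k).det|
  else 0

/-- The universal adjoint polynomial of the fan data `(U, cones)`:
`Adj = ∑_{σ ∈ Σ(d)} |det U_σ| ∏_{ρ ∉ σ(1)} x_ρ`. -/
noncomputable def Adj {ι κ : Type*} [Fintype ι] [DecidableEq ι] [Fintype κ] [DecidableEq κ]
    (U : Matrix ι κ ℝ) (cones : Finset (Finset ι)) : MvPolynomial ι ℝ :=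
  ∑ σ ∈ cones.filter fun σ => σ.card = Fintype.card κ,
    MvPolynomial.C (absDetRows U σ) * ∏ ρ ∈ σᶜ, MvPolynomial.X ρ

/-- The toric amplitude `Amp = ∑_{σ ∈ Σ(d)} |det U_σ| / ∏_{ρ ∈ σ(1)} x_ρ`
as a real-valued function. -/
noncomputable def Amp {ι κ : Type*} [Fintype ι] [DecidableEq ι] [Fintype κ] [DecidableEq κ]
    (U : Matrix ι κ ℝ) (cones : Finset (Finset ι)) (x : ι → ℝ) : ℝ :=
  ∑ σ ∈ cones.filter fun σ => σ.card = Fintype.card κ, absDetRows U σ / ∏ ρ ∈ σ, x ρ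

/-- The toric amplitude with values in `ℝ≥0∞` (for identities with possibly infinite
dual volumes). -/
noncomputable def AmpE {ι κ : Type*} [Fintype ι] [DecidableEq ι] [Fintype κ] [DecidableEq κ]
    (U : Matrix ι κ ℝ) (cones : Finset (Finset ι)) (x : ι → ℝ) : ℝ≥0∞ :=
  ∑ σ ∈ cones.filter fun σ => σ.card = Fintype.card κ,
    ENNReal.ofReal (absDetRows U σ) / ∏ ρ ∈ σ, ENNReal.ofReal (x ρ)

/-- The toric amplitude as an element of the field of rational functions. -/
noncomputable def AmpFrac {ι κ : Type*} [Fintype ι] [DecidableEq ι] [Fintype κ] [DecidableEq κ]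
    (U : Matrix ι κ ℝ) (cones : Finset (Finset ι)) : FractionRing (MvPolynomial ι ℝ) :=
  ∑ σ ∈ cones.filter fun σ => σ.card = Fintype.card κ,
    algebraMap (MvPolynomial ι ℝ) (FractionRing (MvPolynomial ι ℝ)) (MvPolynomial.C (absDetRows U σ)) /
      algebraMap (MvPolynomial ι ℝ) (FractionRing (MvPolynomial ι ℝ)) (∏ ρ ∈ σ, MvPolynomial.X ρ)

/-- The toric amplitude of fan data whose rays are indexed by a type `α` mapping to `ι`
via `f`, viewed inside the rational function field on the `ι`-variables. -/
noncomputable def AmpFracVia {α ι κ' : Type*} [Fintype α] [DecidableEq α]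
    [Fintype κ'] [DecidableEq κ']
    (U' : Matrix α κ' ℝ) (cones' : Finset (Finset α)) (f : α → ι) :
    FractionRing (MvPolynomial ι ℝ) :=
  ∑ σ ∈ cones'.filter fun σ => σ.card = Fintype.card κ',
    algebraMap (MvPolynomial ι ℝ) (FractionRing (MvPolynomial ι ℝ)) (MvPolynomial.C (absDetRows U' σ)) /
      algebraMap (MvPolynomial ι ℝ) (FractionRing (MvPolynomial ι ℝ)) (∏ ρ ∈ σ, MvPolynomial.X (f ρ))

/-- The polyhedron `P_z = {y : U y + z ≥ 0}`. -/
def Pz {ι κ : Type*} [Fintype κ] (U : Matrix ι κ ℝ) (z : ι → ℝ) : Set (κ → ℝ) :=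
  {y | ∀ i, 0 ≤ (∑ j, U i j * y j) + z i}

/-- The face of `P_z` where the inequalities indexed by `τ` are tight. -/
def faceOf {ι κ : Type*} [Fintype κ] (U : Matrix ι κ ℝ) (z : ι → ℝ) (τ : Finset ι) :
    Set (κ → ℝ) :=
  {y | y ∈ Pz U z ∧ ∀ i ∈ τ, (∑ j, U i j * y j) + z i = 0}

/-- `F` is the normal fan of the polytope `P_z`, which is a full-dimensional simple
(bounded) polytope whose facets are indexed by the rays of `F`: a set of inequalities
spans a cone of the normal fan iff they are simultaneously tight on a nonempty face. -/
def IsNormalFanOf {ι κ : Type*} [Fintype ι] [DecidableEq ι] [Fintype κ]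
    (F : SimplicialFan ι κ) (z : ι → ℝ) : Prop :=
  Bornology.IsBounded (Pz F.U z) ∧ (interior (Pz F.U z)).Nonempty ∧
    ∀ σ : Finset ι, σ ∈ F.cones ↔ (faceOf F.U z σ).Nonempty

/-- The polar dual `{u : u ⬝ y ≥ -1 for all y ∈ P}`. -/
def polarDual {κ : Type*} [Fintype κ] (P : Set (κ → ℝ)) : Set (κ → ℝ) :=
  {u | ∀ y ∈ P, -1 ≤ ∑ j, u j * y j}

/-- Warren's adjoint polynomial `adj_{P_z}(y) = Adj(U y + z)`. -/
noncomputable def warrenAdj {ι κ : Type*} [Fintype ι] [DecidableEq ι] [Fintype κ] [DecidableEq κ]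
    (U : Matrix ι κ ℝ) (cones : Finset (Finset ι)) (z : ι → ℝ) : MvPolynomial κ ℝ :=
  MvPolynomial.aeval (fun i : ι => (∑ j, MvPolynomial.C (U i j) * MvPolynomial.X j) + MvPolynomial.C (z i))
    (Adj U cones)

/-- The neighbours `nb(τ)` of a cone `τ`: rays `ρ ∉ τ` with `τ ∪ {ρ}` a cone. -/
def nbF {ι : Type*} [Fintype ι] [DecidableEq ι] (cones : Finset (Finset ι)) (τ : Finset ι) :
    Finset ι :=
  Finset.univ.filter fun ρ => ρ ∉ τ ∧ insert ρ τ ∈ cones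

/-- The rows of `U * T` indexed by `τ` are the first `k` standard basis vectors. -/
def RowsStd {ι : Type*} {d : ℕ} (U : Matrix ι (Fin d) ℝ) (T : Matrix (Fin d) (Fin d) ℝ)
    (τ : Finset ι) (k : ℕ) : Prop :=
  ∃ g : {ρ : ι // ρ ∈ τ} → Fin d, Function.Injective g ∧ (∀ ρ, (g ρ : ℕ) < k) ∧
    ∀ ρ : {ρ : ι // ρ ∈ τ}, (U * T) ρ.1 = Pi.single (g ρ) 1

/-- The ray matrix of the star fan `Σ_τ`: the last `d-k` columns of `U * T`, on the
rows indexed by `nb(τ)` (here `N`). -/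
def starU {ι : Type*} {d : ℕ} (U : Matrix ι (Fin d) ℝ) (T : Matrix (Fin d) (Fin d) ℝ)
    (N : Finset ι) (k : ℕ) : Matrix {ρ : ι // ρ ∈ N} {j : Fin d // k ≤ (j : ℕ)} ℝ :=
  fun ρ j => (U * T) ρ.1 j.1

/-- The cones of the star fan `Σ_τ`, recorded by their sets of rays (as subsets of `N = nb(τ)`). -/
def starCones {ι : Type*} [DecidableEq ι] (cones : Finset (Finset ι)) (τ : Finset ι)
    (N : Finset ι) : Finset (Finset {ρ : ι // ρ ∈ N}) :=
  (cones.filter fun σ => τ ⊆ σ).image fun σ => (σ \ τ).subtype fun ρ => ρ ∈ N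

/-- Restriction of polynomials to the coordinate subspace `Λ_τ = {x_ρ = 0, ρ ∈ τ}`. -/
noncomputable def restrictTo {ι : Type*} {R : Type*} [CommSemiring R] [DecidableEq ι]
    (τ : Finset ι) : MvPolynomial ι R →ₐ[R] MvPolynomial ι R :=
  MvPolynomial.aeval fun ρ => if ρ ∈ τ then 0 else MvPolynomial.X ρ

/-- The deformation cone of a (complete simplicial) fan: those `x` for which each
"virtual vertex" of `P_x` determined by a maximal cone satisfies all inequalities. -/
def DefCone {ι κ : Type*} [Fintype ι] [DecidableEq ι] [Fintype κ] (F : SimplicialFan ι κ) :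
    Set (ι → ℝ) :=
  {x | ∀ σ ∈ F.cones, σ.card = Fintype.card κ →
    ∃ v : κ → ℝ, (∀ ρ ∈ σ, (∑ j, F.U ρ j * v j) + x ρ = 0) ∧
      ∀ ρ : ι, 0 ≤ (∑ j, F.U ρ j * v j) + x ρ}

/-- The `(d+1) × (d+1)` determinant `W_Δ(x)` of the matrix with rows `(u_ρ, x_ρ)`,
`ρ ∈ S` (defined up to sign; zero if `S` does not have `d+1` elements). -/
noncomputable def Wdet {ι κ : Type*} [Fintype κ] [DecidableEq κ]
    (U : Matrix ι κ ℝ) (S : Finset ι) (x : ι → ℝ) : ℝ :=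
  if h : S.card = Fintype.card (Option κ) then
    (Matrix.of fun a b : Option κ =>
      Option.elim b (x ((S.equivFin.symm (Fintype.equivFinOfCardEq h.symm a)) : ι))
        (fun k => U ((S.equivFin.symm (Fintype.equivFinOfCardEq h.symm a)) : ι) k)).det
  else 0

/-!
Since `Adj_Σ` is multilinear, `x_ρ ∂_ρ Adj_Σ(x) = ∑_{σ ∌ ρ} |det U_σ| x^σ̂ = (M φ_Σ(x))_ρ`. At a
singular point of `A_Σ` outside `Z(Σ)` the point `φ_Σ(x)` would therefore be a nonzero point
of `Y_Σ` in the kernel of `M`. Hence `φ_Σ(x) = 0`, and as every cone lies in a maximal one, every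
`x^σ̂` vanishes.
-/

lemma MvPolynomial.X_mul_pderiv_prod_X {R ι : Type*} [CommSemiring R] [DecidableEq ι]
    (ρ : ι) (s : Finset ι) :
    X ρ * pderiv ρ (∏ τ ∈ s, (X τ : MvPolynomial ι R)) =
      if ρ ∈ s then ∏ τ ∈ s, X τ else 0 := by
  induction s using Finset.induction_on with
  | empty => simp
  | @insert a s ha ih =>
    rw [Finset.prod_insert ha, Derivation.leibniz, smul_eq_mul, smul_eq_mul, mul_add,
      mul_left_comm, ih, pderiv_X]
    by_cases h : ρ = a
    · subst h
      simp [ha, mul_comm]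
    · simp [h]

lemma X_mul_pderiv_Adj {ι κ : Type*} [Fintype ι] [DecidableEq ι] [Fintype κ] [DecidableEq κ]
    (U : Matrix ι κ ℝ) (cones : Finset (Finset ι)) (ρ : ι) :
    X ρ * pderiv ρ (Adj U cones) =
      ∑ σ ∈ cones.filter fun σ => σ.card = Fintype.card κ,
        if ρ ∈ σ then 0 else C (absDetRows U σ) * ∏ τ ∈ σᶜ, X τ := by
  rw [Adj, map_sum, Finset.mul_sum]
  refine Finset.sum_congr rfl fun σ _ => ?_
  rw [pderiv_C_mul, mul_left_comm, X_mul_pderiv_prod_X]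
  split_ifs <;> simp_all

lemma sum_absDetRows_mul_prod_compl_eq_zero {ι κ : Type*} [Fintype ι] [DecidableEq ι]
    [Fintype κ] [DecidableEq κ] (U : Matrix ι κ ℝ) (cones : Finset (Finset ι)) (x : ι → ℂ)
    (ρ : ι) (hx : aeval x (pderiv ρ (Adj U cones)) = 0) :
    ∑ σ : {σ : Finset ι // σ ∈ cones ∧ σ.card = Fintype.card κ},
      (if ρ ∈ σ.1 then 0 else (absDetRows U σ.1 : ℂ)) * ∏ τ ∈ σ.1ᶜ, x τ = 0 :=
  calc _ = ∑ σ ∈ cones.filter fun σ => σ.card = Fintype.card κ,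
        aeval x (if ρ ∈ σ then 0 else C (absDetRows U σ) * ∏ τ ∈ σᶜ, X τ) := by
        rw [← Finset.sum_subtype _ (fun σ => Finset.mem_filter) (fun σ =>
          (if ρ ∈ σ then 0 else (absDetRows U σ : ℂ)) * ∏ τ ∈ σᶜ, x τ)]
        refine Finset.sum_congr rfl fun σ _ => ?_
        split_ifs <;> simp [Complex.coe_algebraMap]
    _ = aeval x (X ρ * pderiv ρ (Adj U cones)) := by rw [X_mul_pderiv_Adj, map_sum]
    _ = 0 := by rw [map_mul, hx, mul_zero]

theorem statement17_general {ι κ : Type*} [Fintype ι] [DecidableEq ι] [Fintype κ] [DecidableEq κ]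
    (F : SimplicialFan ι κ)
    (hbar : ∀ σ ∈ F.cones, ∃ σ' ∈ F.cones, σ ⊆ σ' ∧ σ'.card = Fintype.card κ)
    (hY : ∀ y : {σ : Finset ι // σ ∈ F.cones ∧ σ.card = Fintype.card κ} → ℂ,
      (∀ p : MvPolynomial {σ : Finset ι // σ ∈ F.cones ∧ σ.card = Fintype.card κ} ℂ,
        (∀ x : ι → ℂ, (∃ σ ∈ F.cones, (∏ ρ ∈ σᶜ, x ρ) ≠ 0) →
          MvPolynomial.eval (fun σ' => ∏ ρ ∈ (σ'.1)ᶜ, x ρ) p = 0) →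
        MvPolynomial.eval y p = 0) →
      (∀ ρ : ι, (∑ σ' : {σ : Finset ι // σ ∈ F.cones ∧ σ.card = Fintype.card κ},
        (if ρ ∈ σ'.1 then 0 else (absDetRows F.U σ'.1 : ℂ)) * y σ') = 0) →
      y = 0) :
    ∀ x : ι → ℂ, x ≠ 0 →
      (∀ ρ : ι, MvPolynomial.aeval x (MvPolynomial.pderiv ρ (Adj F.U F.cones)) = 0) →
      ∀ σ ∈ F.cones, (∏ ρ ∈ σᶜ, x ρ) = 0 := by
  intro x _ hsing σ hσ
  by_contra hσx
  have hφ : (fun σ' : {σ : Finset ι // σ ∈ F.cones ∧ σ.card = Fintype.card κ} =>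
      ∏ ρ ∈ σ'.1ᶜ, x ρ) = 0 :=
    hY _ (fun p hp => hp x ⟨σ, hσ, hσx⟩)
      fun ρ => sum_absDetRows_mul_prod_compl_eq_zero F.U F.cones x ρ (hsing ρ)
  obtain ⟨σ', hσ', hsub, hcard⟩ := hbar σ hσ
  obtain ⟨ρ, hρ, hxρ⟩ := Finset.prod_eq_zero_iff.mp (congrFun hφ ⟨σ', hσ', hcard⟩)
  exact hσx (Finset.prod_eq_zero (Finset.compl_subset_compl.2 hsub hρ) hxρ)

/-- Suppose every cone of `Σ` is a face of a `d`-dimensional cone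
(`Σ = Σ̄`). Let `Y_Σ` be the Zariski closure of the image of the monomial map
`φ_Σ(x) = (∏_{ρ ∉ σ} x_ρ)_{σ ∈ Σ(d)}` (defined off `Z(Σ)`), and let `M` be the matrix
with `M_{ρ,σ} = |det U_σ|` for `ρ ∉ σ` and `0` otherwise. If no (nonzero) point of
`Y_Σ` satisfies `M · y = 0`, then `Sing(A_Σ) ⊆ Z(Σ)`. -/
theorem statement17 {ι κ : Type*} [Fintype ι] [DecidableEq ι] [Fintype κ] [DecidableEq κ]
    (F : SimplicialFan ι κ) (hrank : F.U.rank = Fintype.card κ)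
    (hbar : ∀ σ ∈ F.cones, ∃ σ' ∈ F.cones, σ ⊆ σ' ∧ σ'.card = Fintype.card κ)
    (hY : ∀ y : {σ : Finset ι // σ ∈ F.cones ∧ σ.card = Fintype.card κ} → ℂ,
      (∀ p : MvPolynomial {σ : Finset ι // σ ∈ F.cones ∧ σ.card = Fintype.card κ} ℂ,
        (∀ x : ι → ℂ, (∃ σ ∈ F.cones, (∏ ρ ∈ σᶜ, x ρ) ≠ 0) →
          MvPolynomial.eval (fun σ' => ∏ ρ ∈ (σ'.1)ᶜ, x ρ) p = 0) →
        MvPolynomial.eval y p = 0) →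
      (∀ ρ : ι, (∑ σ' : {σ : Finset ι // σ ∈ F.cones ∧ σ.card = Fintype.card κ},
        (if ρ ∈ σ'.1 then 0 else (absDetRows F.U σ'.1 : ℂ)) * y σ') = 0) →
      y = 0) :
    ∀ x : ι → ℂ, x ≠ 0 →
      (∀ ρ : ι, MvPolynomial.aeval x (MvPolynomial.pderiv ρ (Adj F.U F.cones)) = 0) →
      ∀ σ ∈ F.cones, (∏ ρ ∈ σᶜ, x ρ) = 0 :=
  statement17_general F hbar hY
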